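/- Assume liminf_{x→∞} (log P[L > x])/(log P[A > x]) ≥ α for some α > 0, and let b₀ be such that P[L ≤ b₀] > 0 and P[A ≤ b₀] > 0. Then for every ε > 0 there exists n₀ such that for all n ≥ n₀ and all b ≥ b₀, P[N_b > n] ≤ P[A ≤ b]^{n(1−ε)} · n^{−α(1−ε)}. -/

import Mathlib

/-!
On `{N_b > n}` all of `A_1, …, A_n` are at most `L_b ≤ b`, so splitting according to whether `L_b`
exceeds a level `x ≤ b` gives `P[N_b > n] ≤ G(x)^n + P[L_b > x] G(b)^n`, where `G(x) = P[A ≤ x]`.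
Take for `x` the quantile with `P[A > x] = t_n = c log n / n` (cut off at `b`). In the first term
`G(x)^n ≤ G(b)^{n(1-ε)} (1 - t_n)^{nε} ≤ G(b)^{n(1-ε)} n^{-cε}`, which is small once `cε > α(1-ε)`.
In the second, `P[L_b > x] ≤ P[L > x] / P[L ≤ b₀]`, and the liminf hypothesis gives
`P[L > x] ≤ t_n^β` with `β = α(1 - ε/2) < α`, which is `o(n^{-α(1-ε)})`.
-/

open MeasureTheory ProbabilityTheory Filter Set

/-- The number of retransmissions: the first index `k ≥ 1` with `A k ω > X ω`,
viewed in `ℕ∞` (so it is `⊤` if no such index exists). -/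
noncomputable def retransTime {Ω : Type*} (A : ℕ → Ω → ℝ) (X : Ω → ℝ) (ω : Ω) : ℕ∞ :=
  sInf {m : ℕ∞ | ∃ k : ℕ, m = (k : ℕ∞) ∧ 1 ≤ k ∧ X ω < A k ω}

open Real Topology

lemma pos_and_le_rpow_of_lt_log_div_log {p q β : ℝ} (hq₀ : 0 ≤ q) (hq₁ : q ≤ 1) (hβ : 0 ≤ β)
    (h : β < log p / log q) : 0 < q ∧ p ≤ q ^ β := by
  -- `log 0 = log 1 = 0` and `x / 0 = 0`, so a ratio above `β ≥ 0` forces `0 < q < 1`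
  have hlog : log q ≠ 0 := fun h0 => by simp [h0] at h; linarith
  have hq : 0 < q := hq₀.lt_of_ne fun h0 => hlog (by simp [← h0])
  have hlog_neg : log q < 0 := (log_nonpos hq₀ hq₁).lt_of_ne hlog
  refine ⟨hq, ?_⟩
  rcases le_or_gt p 0 with hp | hp
  · exact hp.trans (rpow_nonneg hq₀ β)
  · have := (lt_div_iff_of_neg hlog_neg).1 h
    exact ((lt_rpow_iff_log_lt hp hq).2 (by linarith)).le

lemma eventually_pos_and_le_rpow_of_lt_liminf {p q : ℝ → ℝ} {β : ℝ}
    (hq : ∀ x, 0 ≤ q x ∧ q x ≤ 1) (hβ : 0 ≤ β)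
    (h : β < liminf (fun x => log (p x) / log (q x)) atTop) :
    ∀ᶠ x in atTop, 0 < q x ∧ p x ≤ q x ^ β := by
  -- in `ℝ` an unbounded `liminf` is `0`, which `β ≥ 0` excludes
  have hbdd : IsBoundedUnder (· ≥ ·) atTop fun x => log (p x) / log (q x) := by
    by_contra hnb
    rw [Real.liminf_of_not_isBoundedUnder hnb] at h
    linarith
  filter_upwards [eventually_lt_of_lt_liminf h hbdd] with x hx
  exact pos_and_le_rpow_of_lt_log_div_log (hq x).1 (hq x).2 hβ hx

lemma tendsto_mul_log_div_rpow_mul_rpow_atTop {c β κ : ℝ} (hc : 0 ≤ c) (hκβ : κ < β) :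
    Tendsto (fun x => (c * log x / x) ^ β * x ^ κ) atTop (𝓝 0) := by
  have h := ((isLittleO_log_rpow_rpow_atTop β (sub_pos.2 hκβ)).tendsto_div_nhds_zero).const_mul
    (c ^ β)
  rw [mul_zero] at h
  refine h.congr' ?_
  filter_upwards [eventually_ge_atTop 1] with x hx
  have hx₀ : 0 < x := by linarith
  rw [div_rpow (mul_nonneg hc (log_nonneg hx)) hx₀.le, mul_rpow hc (log_nonneg hx),
    rpow_sub hx₀]
  field_simp

lemma pow_le_rpow_mul_exp {g h t ε : ℝ} (hh : 0 ≤ h) (hhg : h ≤ g) (hht : h ≤ 1 - t)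
    (hε₀ : 0 ≤ ε) (hε₁ : ε ≤ 1) {n : ℕ} (hn : n ≠ 0) :
    h ^ n ≤ g ^ (n * (1 - ε)) * exp (-(ε * n * t)) := by
  have hn' : (0 : ℝ) < n := by positivity
  have hsplit : h ^ n = h ^ (n * (1 - ε)) * h ^ (n * ε) := by
    rw [← rpow_add' hh (by nlinarith), ← rpow_natCast]
    ring_nf
  have hexp : h ^ (n * ε) ≤ exp (-(ε * n * t)) := calc
    h ^ (n * ε) ≤ exp (-t) ^ (n * ε) :=
      rpow_le_rpow hh (hht.trans (one_sub_le_exp_neg t)) (by positivity)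
    _ = exp (-(ε * n * t)) := by rw [← exp_mul]; ring_nf
  rw [hsplit]
  exact mul_le_mul (rpow_le_rpow hh hhg (by nlinarith)) hexp (rpow_nonneg hh _)
    (rpow_nonneg (hh.trans hhg) _)

lemma exp_neg_one_add_mul_log_le {x : ℝ} (hx : 2 ≤ x) (κ : ℝ) :
    exp (-((1 + κ) * log x)) ≤ x ^ (-κ) / 2 := by
  have hx₀ : 0 < x := by linarith
  rw [show -((1 + κ) * log x) = log x * (-1 + -κ) by ring, ← rpow_def_of_pos hx₀,
    rpow_add hx₀, rpow_neg_one]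
  calc x⁻¹ * x ^ (-κ) ≤ 2⁻¹ * x ^ (-κ) := by gcongr
    _ = x ^ (-κ) / 2 := by ring

lemma exp_add_div_le_rpow_neg {c ε κ β p F₀ : ℝ} {n : ℕ} (hn : 2 ≤ n) (hcε : c * ε = 1 + κ)
    (hF₀ : 0 < F₀) (hp : p ≤ (c * log n / n) ^ β)
    (hsmall : (c * log n / n) ^ β * (n : ℝ) ^ κ ≤ F₀ / 2) :
    exp (-(ε * n * (c * log n / n))) + p / F₀ ≤ (n : ℝ) ^ (-κ) := by
  have hn' : (2 : ℝ) ≤ n := by exact_mod_cast hn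
  have hexp : exp (-(ε * n * (c * log n / n))) ≤ (n : ℝ) ^ (-κ) / 2 := by
    rw [show ε * n * (c * log n / n) = (1 + κ) * log n by rw [← hcε]; field_simp]
    exact exp_neg_one_add_mul_log_le hn' κ
  have hnκ : 0 < (n : ℝ) ^ κ := by positivity
  have htail : p / F₀ ≤ (n : ℝ) ^ (-κ) / 2 := by
    rw [div_le_iff₀ hF₀, rpow_neg (by positivity)]
    calc p ≤ F₀ / 2 / (n : ℝ) ^ κ := hp.trans ((le_div_iff₀ hnκ).2 hsmall)
      _ = ((n : ℝ) ^ κ)⁻¹ / 2 * F₀ := by ring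
  linarith

lemma eventually_two_le_and_log_div_le {c β κ δ η : ℝ} (hc : 0 ≤ c) (hκβ : κ < β) (hδ : 0 < δ)
    (hη : 0 < η) :
    ∀ᶠ n : ℕ in atTop, 2 ≤ n ∧ c * log n / n ≤ δ ∧ (c * log n / n) ^ β * (n : ℝ) ^ κ ≤ η := by
  have hlim : Tendsto (fun n : ℕ => c * log n / n) atTop (𝓝 0) := by
    have := (tendsto_mul_log_div_rpow_mul_rpow_atTop (β := 1) (κ := 0) hc one_pos).comp
      tendsto_natCast_atTop_atTop
    simpa [Function.comp_def] using this
  have hsmall := (tendsto_mul_log_div_rpow_mul_rpow_atTop hc hκβ).comp tendsto_natCast_atTop_atTop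
  exact (eventually_ge_atTop 2).and
    ((hlim.eventually_le_const hδ).and (hsmall.eventually_le_const hη))

lemma one_le_rpow_mul_rpow_neg {g α ε : ℝ} {n : ℕ} (hg₀ : 0 < g) (hg₁ : g ≤ 1) (hn : 1 ≤ n)
    (hα : 0 ≤ α) (hε : 1 ≤ ε) : 1 ≤ g ^ (n * (1 - ε)) * (n : ℝ) ^ (-(α * (1 - ε))) :=
  one_le_mul_of_one_le_of_one_le
    (one_le_rpow_of_pos_of_le_one_of_nonpos hg₀ hg₁ (by nlinarith [n.cast_nonneg (α := ℝ)]))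
    (one_le_rpow (by exact_mod_cast hn) (by nlinarith))

lemma continuous_cdf (ν : Measure ℝ) [IsProbabilityMeasure ν] [NullSingletonClass ν] :
    Continuous (cdf ν) := by
  refine continuous_iff_continuousAt.2 fun x => continuousAt_iff_continuous_left_right.2
    ⟨?_, (cdf ν).right_continuous x⟩
  refine continuousWithinAt_Iio_iff_Iic.1
    ((cdf ν).mono.continuousWithinAt_Iio_iff_leftLim_eq.2 ?_)
  have hx := (cdf ν).measure_singleton x
  rw [measure_cdf, measure_singleton, eq_comm, ENNReal.ofReal_eq_zero, sub_nonpos] at hx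
  exact le_antisymm ((cdf ν).mono.leftLim_le le_rfl) hx

lemma forall_le_of_nat_lt_retransTime {Ω : Type*} {A : ℕ → Ω → ℝ} {X : Ω → ℝ} {ω : Ω} {n : ℕ}
    (h : (n : ℕ∞) < retransTime A X ω) : ∀ k ∈ Finset.Icc 1 n, A k ω ≤ X ω := by
  intro k hk
  rw [Finset.mem_Icc] at hk
  by_contra! hlt
  have hle : retransTime A X ω ≤ k := sInf_le ⟨k, rfl, hk.1, hlt⟩
  exact (h.trans_le hle).not_ge (by exact_mod_cast hk.2)

section

variable {Ω : Type*} [MeasurableSpace Ω] {μ : Measure Ω}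

lemma measureReal_lt_eq_one_sub [IsProbabilityMeasure μ] {X : Ω → ℝ} (hX : Measurable X)
    (x : ℝ) : μ.real {ω | x < X ω} = 1 - μ.real {ω | X ω ≤ x} := by
  rw [← probReal_compl_eq_one_sub (measurableSet_le hX measurable_const)]
  simp only [compl_ofPred, not_le]

lemma exists_ge_measureReal_lt_eq [IsProbabilityMeasure μ] {X : Ω → ℝ} (hX : Measurable X)
    (hXc : μ.map X ≪ volume) {x₀ t : ℝ} (ht₀ : 0 < t) (ht : t ≤ μ.real {ω | x₀ < X ω}) :
    ∃ x, x₀ ≤ x ∧ μ.real {ω | x < X ω} = t := by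
  have : IsProbabilityMeasure (μ.map X) := Measure.isProbabilityMeasure_map hX.aemeasurable
  have : NullSingletonClass (μ.map X) := ⟨fun x => hXc (by simp)⟩
  have hcdf (x : ℝ) : cdf (μ.map X) x = μ.real {ω | X ω ≤ x} := by
    rw [cdf_eq_real, map_measureReal_apply hX measurableSet_Iic]
    rfl
  obtain ⟨x₁, hx₁, hx₀x₁⟩ := (((tendsto_cdf_atTop (μ.map X)).eventually_const_lt
    (sub_lt_self 1 ht₀)).and (eventually_ge_atTop x₀)).exists
  obtain ⟨x, ⟨hx₀x, -⟩, hx⟩ := intermediate_value_Icc hx₀x₁ (continuous_cdf _).continuousOn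
    (show 1 - t ∈ Icc (cdf (μ.map X) x₀) (cdf (μ.map X) x₁) from
      ⟨by rw [hcdf]; linarith [measureReal_lt_eq_one_sub (μ := μ) hX x₀], hx₁.le⟩)
  refine ⟨x, hx₀x, ?_⟩
  rw [measureReal_lt_eq_one_sub hX, ← hcdf, hx]
  ring

variable {A : ℕ → Ω → ℝ}

lemma measure_forall_le_eq_pow (hA : ∀ i, Measurable (A i)) (hAindep : iIndepFun A μ)
    (hAident : ∀ i, μ.map (A i) = μ.map (A 0)) (S : Finset ℕ) (x : ℝ) :
    μ {ω | ∀ k ∈ S, A k ω ≤ x} = μ {ω | A 0 ω ≤ x} ^ S.card := by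
  have hident (k : ℕ) : μ (A k ⁻¹' Iic x) = μ (A 0 ⁻¹' Iic x) := by
    rw [← Measure.map_apply (hA k) measurableSet_Iic, hAident k,
      Measure.map_apply (hA 0) measurableSet_Iic]
  have h := hAindep.measure_inter_preimage_eq_mul S (sets := fun _ => Iic x)
    (fun _ _ => measurableSet_Iic)
  simp only [hident, Finset.prod_const] at h
  convert h using 3 <;> ext <;> simp

lemma measureReal_nat_lt_retransTime_le [IsFiniteMeasure μ] {X : Ω → ℝ}
    (hA : ∀ i, Measurable (A i)) (hAindep : iIndepFun A μ)
    (hAident : ∀ i, μ.map (A i) = μ.map (A 0)) (hXA : IndepFun X (fun ω i => A i ω) μ)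
    {b : ℝ} (hXb : ∀ᵐ ω ∂μ, X ω ≤ b) (n : ℕ) (x : ℝ) :
    μ.real {ω | (n : ℕ∞) < retransTime A X ω}
      ≤ μ.real {ω | A 0 ω ≤ x} ^ n + μ.real {ω | x < X ω} * μ.real {ω | A 0 ω ≤ b} ^ n := by
  set S := Finset.Icc 1 n
  have hsub : {ω | (n : ℕ∞) < retransTime A X ω} ⊆ {ω | ∀ k ∈ S, A k ω ≤ x}
      ∪ ({ω | x < X ω} ∩ {ω | ∀ k ∈ S, A k ω ≤ b}) ∪ {ω | b < X ω} := by
    intro ω hω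
    have hle := forall_le_of_nat_lt_retransTime hω
    by_cases hXx : X ω ≤ x
    · exact Or.inl (Or.inl fun k hk => (hle k hk).trans hXx)
    by_cases hXb : X ω ≤ b
    · exact Or.inl (Or.inr ⟨not_le.1 hXx, fun k hk => (hle k hk).trans hXb⟩)
    · exact Or.inr (not_le.1 hXb)
  have hnull : μ {ω | b < X ω} = 0 := by simpa only [not_le] using ae_iff.1 hXb
  have hindep : μ ({ω | x < X ω} ∩ {ω | ∀ k ∈ S, A k ω ≤ b})
      = μ {ω | x < X ω} * μ {ω | ∀ k ∈ S, A k ω ≤ b} :=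
    hXA.measure_inter_preimage_eq_mul (Ioi x) {f | ∀ k ∈ S, f k ≤ b} measurableSet_Ioi
      (by measurability)
  have hcard : S.card = n := by simp [S]
  calc μ.real {ω | (n : ℕ∞) < retransTime A X ω}
      ≤ μ.real {ω | ∀ k ∈ S, A k ω ≤ x} + μ.real ({ω | x < X ω} ∩ {ω | ∀ k ∈ S, A k ω ≤ b})
        + μ.real {ω | b < X ω} :=
        (measureReal_mono hsub).trans ((measureReal_union_le _ _).trans
          (add_le_add_left (measureReal_union_le _ _) _))
    _ = _ := by
        simp only [Measure.real, hindep, hnull, measure_forall_le_eq_pow hA hAindep hAident,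
          hcard, ENNReal.toReal_mul, ENNReal.toReal_pow, ENNReal.toReal_zero, add_zero]

lemma measureReal_min_lt_le_div [IsProbabilityMeasure μ] {L Y : Ω → ℝ} (hL : Measurable L)
    (hY : Measurable Y) {b₀ b : ℝ} (hb : b₀ ≤ b) (hYb : ∀ᵐ ω ∂μ, Y ω ≤ b)
    (hYcdf : ∀ x ∈ Icc 0 b,
      μ.real {ω | Y ω ≤ x} = μ.real {ω | L ω ≤ x} / μ.real {ω | L ω ≤ b})
    (hL₀ : 0 < μ.real {ω | L ω ≤ b₀}) {x : ℝ} (hx : 0 ≤ x) :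
    μ.real {ω | min x b < Y ω} ≤ μ.real {ω | x < L ω} / μ.real {ω | L ω ≤ b₀} := by
  rcases le_total x b with hxb | hbx
  · have hLb : μ.real {ω | L ω ≤ b₀} ≤ μ.real {ω | L ω ≤ b} :=
      measureReal_mono fun ω h => le_trans h hb
    rw [min_eq_left hxb, measureReal_lt_eq_one_sub hY, hYcdf x ⟨hx, hxb⟩,
      measureReal_lt_eq_one_sub hL]
    calc 1 - μ.real {ω | L ω ≤ x} / μ.real {ω | L ω ≤ b}
        ≤ (1 - μ.real {ω | L ω ≤ x}) / μ.real {ω | L ω ≤ b} := by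
          rw [sub_div]
          gcongr
          exact one_le_one_div (hL₀.trans_le hLb) measureReal_le_one
      _ ≤ (1 - μ.real {ω | L ω ≤ x}) / μ.real {ω | L ω ≤ b₀} := by
          gcongr
          exact sub_nonneg.2 measureReal_le_one
  · have hnull : μ {ω | b < Y ω} = 0 := by simpa only [not_le] using ae_iff.1 hYb
    rw [min_eq_right hbx, measureReal_def, hnull, ENNReal.toReal_zero]
    positivity

lemma measureReal_nat_lt_retransTime_le_rpow_mul [IsProbabilityMeasure μ] {L Y : Ω → ℝ}
    (hA : ∀ i, Measurable (A i)) (hAindep : iIndepFun A μ)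
    (hAident : ∀ i, μ.map (A i) = μ.map (A 0)) (hL : Measurable L) (hY : Measurable Y)
    (hYA : IndepFun Y (fun ω i => A i ω) μ) {b₀ b : ℝ} (hb : b₀ ≤ b) (hYb : ∀ᵐ ω ∂μ, Y ω ≤ b)
    (hYcdf : ∀ x ∈ Icc 0 b,
      μ.real {ω | Y ω ≤ x} = μ.real {ω | L ω ≤ x} / μ.real {ω | L ω ≤ b})
    (hL₀ : 0 < μ.real {ω | L ω ≤ b₀}) {x ε : ℝ} (hx : 0 ≤ x) (hε₀ : 0 ≤ ε) (hε₁ : ε ≤ 1)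
    {n : ℕ} (hn : n ≠ 0) :
    μ.real {ω | (n : ℕ∞) < retransTime A Y ω}
      ≤ μ.real {ω | A 0 ω ≤ b} ^ (n * (1 - ε)) * (exp (-(ε * n * μ.real {ω | x < A 0 ω}))
        + μ.real {ω | x < L ω} / μ.real {ω | L ω ≤ b₀}) := by
  have hmin_b : μ.real {ω | A 0 ω ≤ min x b} ≤ μ.real {ω | A 0 ω ≤ b} :=
    measureReal_mono fun ω h => le_trans h (min_le_right x b)
  have hmin_x : μ.real {ω | A 0 ω ≤ min x b} ≤ 1 - μ.real {ω | x < A 0 ω} := by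
    rw [measureReal_lt_eq_one_sub (hA 0), sub_sub_cancel]
    exact measureReal_mono fun ω h => le_trans h (min_le_left x b)
  have hpow : μ.real {ω | A 0 ω ≤ b} ^ n ≤ μ.real {ω | A 0 ω ≤ b} ^ (n * (1 - ε)) := by
    rw [← rpow_natCast]
    exact rpow_le_rpow_of_exponent_ge' measureReal_nonneg measureReal_le_one
      (by have : (0 : ℝ) ≤ n := n.cast_nonneg; nlinarith) (by nlinarith)
  calc μ.real {ω | (n : ℕ∞) < retransTime A Y ω}
      ≤ μ.real {ω | A 0 ω ≤ min x b} ^ n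
        + μ.real {ω | min x b < Y ω} * μ.real {ω | A 0 ω ≤ b} ^ n :=
        measureReal_nat_lt_retransTime_le hA hAindep hAident hYA hYb n (min x b)
    _ ≤ μ.real {ω | A 0 ω ≤ b} ^ (n * (1 - ε)) * exp (-(ε * n * μ.real {ω | x < A 0 ω}))
        + μ.real {ω | x < L ω} / μ.real {ω | L ω ≤ b₀}
          * μ.real {ω | A 0 ω ≤ b} ^ (n * (1 - ε)) :=
        add_le_add (pow_le_rpow_mul_exp measureReal_nonneg hmin_b hmin_x hε₀ hε₁ hn)
          (mul_le_mul (measureReal_min_lt_le_div hL hY hb hYb hYcdf hL₀ hx) hpow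
            (by positivity) (by positivity))
    _ = _ := by ring

end

theorem retrans_upper_bound_general
    {Ω : Type*} [MeasurableSpace Ω] (μ : Measure Ω) [IsProbabilityMeasure μ]
    (A : ℕ → Ω → ℝ) (L : Ω → ℝ) (Lb : ℝ → Ω → ℝ)
    (hAmeas : ∀ i, Measurable (A i))
    (hAindep : iIndepFun A μ)
    (hAident : ∀ i, μ.map (A i) = μ.map (A 0))
    (hAcont : μ.map (A 0) ≪ (volume : Measure ℝ))
    (hLmeas : Measurable L)
    (hLbmeas : ∀ b : ℝ, Measurable (Lb b))
    (hLbindep : ∀ b : ℝ, IndepFun (Lb b) (fun ω i => A i ω) μ)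
    (hLbrange : ∀ b : ℝ, 0 < b → ∀ᵐ ω ∂μ, Lb b ω ∈ Set.Icc 0 b)
    (hLbcdf : ∀ b : ℝ, 0 < b → 0 < (μ {ω | L ω ≤ b}).toReal →
      ∀ x ∈ Set.Icc (0 : ℝ) b,
        (μ {ω | Lb b ω ≤ x}).toReal
          = (μ {ω | L ω ≤ x}).toReal / (μ {ω | L ω ≤ b}).toReal)
    (α : ℝ) (hα : 0 < α)
    (hliminf : α ≤ Filter.liminf
      (fun x : ℝ => Real.log (μ {ω | x < L ω}).toReal / Real.log (μ {ω | x < A 0 ω}).toReal)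
      Filter.atTop)
    (b₀ : ℝ) (hb₀ : 0 < b₀)
    (hb₀L : 0 < (μ {ω | L ω ≤ b₀}).toReal)
    (hb₀A : 0 < (μ {ω | A 0 ω ≤ b₀}).toReal) :
    ∀ ε > (0 : ℝ), ∃ n₀ : ℕ, ∀ n : ℕ, n₀ ≤ n → ∀ b : ℝ, b₀ ≤ b →
      (μ {ω | (n : ℕ∞) < retransTime A (Lb b) ω}).toReal
        ≤ (μ {ω | A 0 ω ≤ b}).toReal ^ ((n : ℝ) * (1 - ε)) * (n : ℝ) ^ (-(α * (1 - ε))) := by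
  simp only [← measureReal_def] at hLbcdf hliminf hb₀L hb₀A ⊢
  intro ε hε
  rcases le_or_gt 1 ε with hε₁ | hε₁
  · exact ⟨1, fun n hn b hb => measureReal_le_one.trans (one_le_rpow_mul_rpow_neg
      (hb₀A.trans_le (measureReal_mono fun _ h => h.trans hb)) measureReal_le_one hn hα.le hε₁)⟩
  set κ := α * (1 - ε) with hκ
  set β := α * (1 - ε / 2) with hβ
  set c := (1 + κ) / ε
  have hc : 0 < c := div_pos (by nlinarith) hε
  obtain ⟨x₁, hx₁⟩ := ((eventually_pos_and_le_rpow_of_lt_liminf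
    (p := fun x => μ.real {ω | x < L ω}) (q := fun x => μ.real {ω | x < A 0 ω}) (β := β)
    (fun _ => ⟨measureReal_nonneg, measureReal_le_one⟩) (by nlinarith)
    (hliminf.trans_lt' (by nlinarith))).and (eventually_ge_atTop b₀)).exists_forall_of_atTop
  obtain ⟨n₀, hn₀⟩ := (eventually_two_le_and_log_div_le hc.le (by nlinarith : κ < β)
    (hx₁ x₁ le_rfl).1.1 (half_pos hb₀L)).exists_forall_of_atTop
  refine ⟨n₀, fun n hn b hb => ?_⟩
  obtain ⟨hn₂, htx₁, htβ⟩ := hn₀ n hn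
  have ht₀ : 0 < c * log n / n := by
    have := log_pos (by exact_mod_cast hn₂ : (1 : ℝ) < n)
    positivity
  obtain ⟨x, hx₁x, hx⟩ := exists_ge_measureReal_lt_eq (hAmeas 0) hAcont ht₀ htx₁
  obtain ⟨⟨-, hLx⟩, hb₀x⟩ := hx₁ x hx₁x
  have hb₀b : 0 < b := hb₀.trans_le hb
  calc μ.real {ω | (n : ℕ∞) < retransTime A (Lb b) ω}
      ≤ μ.real {ω | A 0 ω ≤ b} ^ (n * (1 - ε)) * (exp (-(ε * n * μ.real {ω | x < A 0 ω}))
        + μ.real {ω | x < L ω} / μ.real {ω | L ω ≤ b₀}) :=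
        measureReal_nat_lt_retransTime_le_rpow_mul hAmeas hAindep hAident hLmeas (hLbmeas b)
          (hLbindep b) hb ((hLbrange b hb₀b).mono fun _ h => h.2)
          (hLbcdf b hb₀b (hb₀L.trans_le (measureReal_mono fun _ h => h.trans hb))) hb₀L
          (hb₀.le.trans hb₀x) hε.le hε₁.le (by omega)
    _ ≤ μ.real {ω | A 0 ω ≤ b} ^ (n * (1 - ε)) * (n : ℝ) ^ (-κ) := by
        rw [hx] at hLx ⊢
        gcongr
        exact exp_add_div_le_rpow_neg hn₂ (div_mul_cancel₀ _ hε.ne') hb₀L hLx htβ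

/-- Proposition 1, restated: product of power law and geometric bound. -/
theorem retrans_upper_bound
    {Ω : Type*} [MeasurableSpace Ω] (μ : Measure Ω) [IsProbabilityMeasure μ]
    (A : ℕ → Ω → ℝ) (L : Ω → ℝ) (Lb : ℝ → Ω → ℝ)
    (hAmeas : ∀ i, Measurable (A i))
    (hAindep : iIndepFun A μ)
    (hAident : ∀ i, μ.map (A i) = μ.map (A 0))
    (hAcont : μ.map (A 0) ≪ (volume : Measure ℝ))
    (hLmeas : Measurable L)
    (hLcont : μ.map L ≪ (volume : Measure ℝ))
    (hGpos : ∀ x : ℝ, 0 ≤ x → 0 < (μ {ω | x < A 0 ω}).toReal)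
    (hFpos : ∀ x : ℝ, 0 ≤ x → 0 < (μ {ω | x < L ω}).toReal)
    (hLbmeas : ∀ b : ℝ, Measurable (Lb b))
    (hLbindep : ∀ b : ℝ, IndepFun (Lb b) (fun ω i => A i ω) μ)
    (hLbrange : ∀ b : ℝ, 0 < b → ∀ᵐ ω ∂μ, Lb b ω ∈ Set.Icc 0 b)
    (hLbcdf : ∀ b : ℝ, 0 < b → 0 < (μ {ω | L ω ≤ b}).toReal →
      ∀ x ∈ Set.Icc (0 : ℝ) b,
        (μ {ω | Lb b ω ≤ x}).toReal
          = (μ {ω | L ω ≤ x}).toReal / (μ {ω | L ω ≤ b}).toReal)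
    (α : ℝ) (hα : 0 < α)
    (hliminf : α ≤ Filter.liminf
      (fun x : ℝ => Real.log (μ {ω | x < L ω}).toReal / Real.log (μ {ω | x < A 0 ω}).toReal)
      Filter.atTop)
    (b₀ : ℝ) (hb₀ : 0 < b₀)
    (hb₀L : 0 < (μ {ω | L ω ≤ b₀}).toReal)
    (hb₀A : 0 < (μ {ω | A 0 ω ≤ b₀}).toReal) :
    ∀ ε > (0 : ℝ), ∃ n₀ : ℕ, ∀ n : ℕ, n₀ ≤ n → ∀ b : ℝ, b₀ ≤ b →
      (μ {ω | (n : ℕ∞) < retransTime A (Lb b) ω}).toReal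
        ≤ (μ {ω | A 0 ω ≤ b}).toReal ^ ((n : ℝ) * (1 - ε)) * (n : ℝ) ^ (-(α * (1 - ε))) :=
  retrans_upper_bound_general μ A L Lb hAmeas hAindep hAident hAcont hLmeas hLbmeas hLbindep
    hLbrange hLbcdf α hα hliminf b₀ hb₀ hb₀L hb₀A
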